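/- arXiv:2401.03906 — 7 statements merged into one kernel-verified Lean document; each statement's English description precedes it below -/
import Mathlib

section
/- Let d ≥ 3, n, k be positive integers with k ≤ n^(d/(d+1)) / (d·log₂(n+1))^(1/(d+1)). Then (binom(n,k)^d + 1)^(k^d) < 2^(n^d). Consequently, the map sending a binary n×…×n (d-dimensional) hypermatrix A to S_k(A) (the entrywise sum of all its k×…×k subhypermatrices) is not injective: there exist distinct hypermatrices A ≠ A' with S_k(A) = S_k(A'). -/
/-!
Each entry of `S_k(A)` lies in `[0, C(n,k)^d]`, so `S_k` takes at most `(C(n,k)^d + 1)^(k^d)`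
values, while there are `2^(n^d)` binary hypermatrices. Since `C(n,k)^d + 1 < (n+1)^(kd)`, it
suffices that `d k^(d+1) log₂(n+1) ≤ n^d`, which is the hypothesis on `k` raised to the power
`d + 1`; pigeonhole then gives non-injectivity.
-/

/-- The entrywise sum of all `k × ⋯ × k` subhypermatrices of a binary
`n × ⋯ × n` `d`-dimensional hypermatrix `A`. -/
def Sk (d n k : ℕ) (A : (Fin d → Fin n) → Bool) : (Fin d → Fin k) → ℕ :=
  fun u => ∑ σ : Fin d → {s : Finset (Fin n) // s.card = k},
    (A (fun j => ((σ j).1.orderIsoOfFin (σ j).2 (u j) : Fin n))).toNat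

lemma Nat.pow_add_one_lt_add_one_pow {x m : ℕ} (hx : 1 ≤ x) (hm : 2 ≤ m) :
    x ^ m + 1 < (x + 1) ^ m := by
  obtain ⟨j, rfl⟩ := Nat.exists_eq_add_of_le' hm
  have h := pow_add_pow_le (Nat.zero_le x) zero_le_one (Nat.succ_ne_zero j)
  rw [one_pow] at h
  calc x ^ (j + 2) + 1 < (x ^ (j + 1) + 1) * (x + 1) := by
        rw [pow_succ x (j + 1)]; nlinarith [Nat.one_le_pow (j + 1) x hx]
    _ ≤ (x + 1) ^ (j + 1) * (x + 1) := by gcongr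
    _ = (x + 1) ^ (j + 2) := (pow_succ _ _).symm

lemma Nat.choose_pow_add_one_lt {n k d : ℕ} (hn : 0 < n) (hk : 0 < k) (hd : 2 ≤ d) :
    n.choose k ^ d + 1 < (n + 1) ^ (k * d) :=
  calc n.choose k ^ d + 1 ≤ n ^ (k * d) + 1 := by
        rw [pow_mul]; gcongr; exact Nat.choose_le_pow n k
    _ < (n + 1) ^ (k * d) := Nat.pow_add_one_lt_add_one_pow hn (by nlinarith)

lemma Real.pow_succ_mul_le_of_le_rpow_div_rpow {x y c : ℝ} {m : ℕ} (hx : 0 ≤ x) (hy : 0 ≤ y)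
    (hc : 0 < c) (h : x ≤ y ^ ((m : ℝ) / (m + 1)) / c ^ (1 / ((m : ℝ) + 1))) :
    x ^ (m + 1) * c ≤ y ^ m := by
  rw [le_div_iff₀ (Real.rpow_pos_of_pos hc _)] at h
  have h' := pow_le_pow_left₀ (by positivity) h (m + 1)
  rwa [mul_pow, ← Real.rpow_natCast (c ^ _), ← Real.rpow_natCast (y ^ _), ← Real.rpow_mul hc.le,
    ← Real.rpow_mul hy, Nat.cast_add_one, one_div_mul_cancel (by positivity),
    div_mul_cancel₀ _ (by positivity), Real.rpow_one, Real.rpow_natCast] at h'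

lemma Nat.pow_le_two_pow_of_mul_logb_le {a N M : ℕ} (ha : 0 < a)
    (h : (N : ℝ) * Real.logb 2 a ≤ M) : a ^ N ≤ 2 ^ M := by
  rw [← Nat.cast_le (α := ℝ), ← Real.logb_le_logb one_lt_two (by positivity) (by positivity)]
  push_cast
  rwa [Real.logb_pow, Real.logb_pow, Real.logb_self_eq_one one_lt_two, mul_one]

lemma Function.not_injective_of_le_of_card_lt {α ι : Type*} [Fintype α] [Fintype ι]
    {f : α → ι → ℕ} {B : ℕ} (hf : ∀ a i, f a i ≤ B)
    (hcard : (B + 1) ^ Fintype.card ι < Fintype.card α) : ¬ Function.Injective f := by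
  classical
  intro hinj
  let g : α → ι → Fin (B + 1) := fun a i => ⟨f a i, Nat.lt_succ_of_le (hf a i)⟩
  have hg : Function.Injective g := fun a b hab =>
    hinj (funext fun i => congrArg Fin.val (congrFun hab i))
  have := Fintype.card_le_of_injective g hg
  rw [Fintype.card_fun, Fintype.card_fin] at this
  omega

lemma Sk_le_choose_pow (d n k : ℕ) (A : (Fin d → Fin n) → Bool) (u : Fin d → Fin k) :
    Sk d n k A u ≤ n.choose k ^ d :=
  calc Sk d n k A u ≤ ∑ _σ : Fin d → {s : Finset (Fin n) // s.card = k}, 1 :=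
        Finset.sum_le_sum fun _ _ => Bool.toNat_le _
    _ = n.choose k ^ d := by simp [Fintype.card_finset_len]

theorem stmt0 (d n k : ℕ) (hd : 3 ≤ d) (hn : 0 < n) (hk : 0 < k)
    (hkb : (k : ℝ) ≤ (n : ℝ) ^ ((d : ℝ) / ((d : ℝ) + 1)) /
      ((d : ℝ) * Real.logb 2 ((n : ℝ) + 1)) ^ (1 / ((d : ℝ) + 1))) :
    ((Nat.choose n k) ^ d + 1) ^ (k ^ d) < 2 ^ (n ^ d) ∧
      ¬ Function.Injective (Sk d n k) := by
  have hlog : 1 ≤ Real.logb 2 ((n : ℝ) + 1) := by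
    rw [Real.le_logb_iff_rpow_le one_lt_two (by positivity), Real.rpow_one]
    exact_mod_cast Nat.succ_le_succ hn
  have hkey : (k : ℝ) ^ (d + 1) * (d * Real.logb 2 ((n : ℝ) + 1)) ≤ (n : ℝ) ^ d :=
    Real.pow_succ_mul_le_of_le_rpow_div_rpow (by positivity) (by positivity)
      (by positivity) hkb
  have hlt : (n.choose k ^ d + 1) ^ (k ^ d) < 2 ^ (n ^ d) :=
    calc (n.choose k ^ d + 1) ^ (k ^ d) < ((n + 1) ^ (k * d)) ^ (k ^ d) :=
          Nat.pow_lt_pow_left (Nat.choose_pow_add_one_lt hn hk (by omega)) (by positivity)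
      _ = (n + 1) ^ (d * k ^ (d + 1)) := by ring
      _ ≤ 2 ^ (n ^ d) := Nat.pow_le_two_pow_of_mul_logb_le (Nat.succ_pos n) (by
          push_cast; linarith)
  refine ⟨hlt, Function.not_injective_of_le_of_card_lt (Sk_le_choose_pow d n k) ?_⟩
  simpa [Fintype.card_fun] using hlt
end

section
/- Fix positive integers n, k with k ≤ n. For 1 ≤ u ≤ k define β_u(x) = binom(x−1, u−1)·binom(n−x, k−u), a polynomial in x of degree k−1. Then β_1, …, β_k form a basis of the vector space of real polynomials of degree less than k. -/
open Polynomial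

/-- The polynomial `binom(q, m) = q(q-1)⋯(q-m+1)/m!` for a polynomial argument `q`. -/
noncomputable def choosePoly (m : ℕ) (q : Polynomial ℝ) : Polynomial ℝ :=
  Polynomial.C (1 / (m.factorial : ℝ)) * ∏ i ∈ Finset.range m, (q - Polynomial.C (i : ℝ))

/-- `β_u(x) = binom(x-1, u-1) * binom(n-x, k-u)`. -/
noncomputable def betaPoly (n k u : ℕ) : Polynomial ℝ :=
  choosePoly (u - 1) (Polynomial.X - Polynomial.C 1) *
    choosePoly (k - u) (Polynomial.C (n : ℝ) - Polynomial.X)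

/-! Evaluate `β_1, …, β_k` at the points `1, …, k`. Since `binom(j-1, u-1) = 0` for
`j < u`, the evaluation matrix is upper triangular, and `k ≤ n` makes its diagonal entries
`binom(n-u, k-u)` nonzero. So the `β_u` are `k` linearly independent polynomials of degree
`< k`, hence a basis. -/

theorem Polynomial.linearIndependent_of_eval_triangular {R ι : Type*} [CommRing R] [IsDomain R]
    [Fintype ι] [LinearOrder ι] (p : ι → R[X]) (x : ι → R)
    (hlt : ∀ i j, j < i → (p i).eval (x j) = 0) (hdiag : ∀ i, (p i).eval (x i) ≠ 0) :
    LinearIndependent R p := by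
  let M : Matrix ι ι R := Matrix.of fun i j => (p i).eval (x j)
  have hM : M.IsUpperTriangular := fun i j hji => hlt i j hji
  have hdet : M.det ≠ 0 := by
    rw [Matrix.det_of_isUpperTriangular hM]
    exact Finset.prod_ne_zero_iff.2 fun i _ => hdiag i
  apply LinearIndependent.of_comp (LinearMap.pi fun j => leval (x j))
  exact Matrix.linearIndependent_rows_of_det_ne_zero hdet

lemma natDegree_choosePoly_le (m : ℕ) {q : ℝ[X]} (hq : q.natDegree ≤ 1) :
    (choosePoly m q).natDegree ≤ m := by
  refine (natDegree_C_mul_le _ _).trans <| (natDegree_prod_le _ _).trans ?_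
  calc ∑ i ∈ Finset.range m, (q - C (i : ℝ)).natDegree
      ≤ ∑ _i ∈ Finset.range m, 1 :=
        Finset.sum_le_sum fun i _ => (natDegree_sub_le _ _).trans (by simp [hq])
    _ = m := by simp

lemma eval_choosePoly (m : ℕ) (q : ℝ[X]) (x : ℝ) :
    (choosePoly m q).eval x = 1 / (m.factorial : ℝ) * ∏ i ∈ Finset.range m, (q.eval x - i) := by
  simp [choosePoly, eval_prod]

lemma eval_choosePoly_eq_zero {m j : ℕ} {q : ℝ[X]} {x : ℝ} (hq : q.eval x = j) (hj : j < m) :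
    (choosePoly m q).eval x = 0 := by
  rw [eval_choosePoly, Finset.prod_eq_zero (Finset.mem_range.2 hj) (by rw [hq, sub_self]),
    mul_zero]

lemma eval_choosePoly_pos {m : ℕ} {q : ℝ[X]} {x : ℝ} (hq : (m : ℝ) - 1 < q.eval x) :
    0 < (choosePoly m q).eval x := by
  rw [eval_choosePoly]
  refine mul_pos (by positivity) (Finset.prod_pos fun i hi => ?_)
  have : (i : ℝ) + 1 ≤ m := by exact_mod_cast Finset.mem_range.1 hi
  linarith

lemma betaPoly_mem_degreeLT (n : ℕ) {k u : ℕ} (hu : u < k) :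
    betaPoly n k (u + 1) ∈ degreeLT ℝ k := by
  have hdeg : (betaPoly n k (u + 1)).natDegree ≤ u + (k - (u + 1)) := by
    refine natDegree_mul_le.trans (Nat.add_le_add ?_ ?_)
    · simpa using natDegree_choosePoly_le u ((natDegree_sub_le _ _).trans (by simp))
    · exact natDegree_choosePoly_le _ ((natDegree_sub_le _ _).trans (by simp))
  rw [mem_degreeLT]
  exact (degree_le_natDegree).trans_lt (by exact_mod_cast hdeg.trans_lt (by omega))

lemma eval_betaPoly_eq_zero (n k : ℕ) {u j : ℕ} (hj : j < u) :
    (betaPoly n k (u + 1)).eval ((j : ℝ) + 1) = 0 := by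
  rw [betaPoly, eval_mul, eval_choosePoly_eq_zero (j := j) (by simp) (by omega), zero_mul]

lemma eval_betaPoly_self_pos {n k u : ℕ} (hu : u < k) (hkn : k ≤ n) :
    0 < (betaPoly n k (u + 1)).eval ((u : ℝ) + 1) := by
  have hk : ((k - (u + 1) : ℕ) : ℝ) + u + 1 = k := by
    rw [add_assoc]; exact_mod_cast Nat.sub_add_cancel hu
  have hkn : (k : ℝ) ≤ n := by exact_mod_cast hkn
  rw [betaPoly, eval_mul]
  exact mul_pos (eval_choosePoly_pos (by simp)) (eval_choosePoly_pos (by rw [eval_sub, eval_C, eval_X]; linarith))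

theorem stmt2_general (n k : ℕ) (hkn : k ≤ n) :
    ∃ B : Module.Basis (Fin k) ℝ (Polynomial.degreeLT ℝ k),
      ∀ u : Fin k, (B u : Polynomial ℝ) = betaPoly n k ((u : ℕ) + 1) := by
  let β : Fin k → degreeLT ℝ k := fun u => ⟨betaPoly n k (u + 1), betaPoly_mem_degreeLT n u.isLt⟩
  have hβ : LinearIndependent ℝ β := by
    apply LinearIndependent.of_comp (degreeLT ℝ k).subtype
    refine linearIndependent_of_eval_triangular _ (fun j : Fin k => (j : ℝ) + 1)
      (fun u j hju => eval_betaPoly_eq_zero n k hju) (fun u => ?_)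
    exact (eval_betaPoly_self_pos u.isLt hkn).ne'
  have hcard : Fintype.card (Fin k) = Module.finrank ℝ (degreeLT ℝ k) := by
    simp [(degreeLTEquiv ℝ k).finrank_eq]
  exact ⟨basisOfLinearIndependentOfCardEqFinrank' β hβ hcard,
    fun u => by rw [coe_basisOfLinearIndependentOfCardEqFinrank']⟩

theorem stmt2 (n k : ℕ) (hn : 0 < n) (hk : 0 < k) (hkn : k ≤ n) :
    ∃ B : Module.Basis (Fin k) ℝ (Polynomial.degreeLT ℝ k),
      ∀ u : Fin k, (B u : Polynomial ℝ) = betaPoly n k ((u : ℕ) + 1) :=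
  stmt2_general n k hkn
end

section
/- Let λ be a positive integer and d ≥ 3. Let a = (a₁,…,a_d) ∈ ℤ^d be primitive (gcd of all coordinates is 1) satisfying: gcd(λ^d, a_i) = λ^{d−i} for 3 ≤ i ≤ d, gcd(a₁,a₂) = λ^{d−2}, and √(a₁²+a₂²) ≥ λ^{d−1}. Then every nonzero integer point x = (x₁,…,x_d) with a₁x₁ + ⋯ + a_d x_d = 0 has Euclidean norm ‖x‖ ≥ λ. -/
/-!
Take the last nonzero coordinate `x k` of a nonzero solution `x`. If `k ≥ 3` (counting from 1),
all `a i` with `i < k` are divisible by `λ^(d-k+1)`, hence so is `a k * x k`; since `a k` contains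
exactly `λ^(d-k)` of `λ^d`, this forces `λ ∣ x k`. Otherwise `a₁ x₁ + a₂ x₂ = 0`, so `(x₁, x₂)` is a
nonzero multiple of `(-a₂, a₁) / gcd(a₁, a₂)`, whose length is at least `λ^(d-1) / λ^(d-2) = λ`.
-/

theorem exists_last_ne_zero {ι M : Type*} [Fintype ι] [LinearOrder ι] [Zero M] {x : ι → M}
    (hx : x ≠ 0) : ∃ k, x k ≠ 0 ∧ ∀ i, k < i → x i = 0 := by
  classical
  obtain ⟨i, hi⟩ := Function.ne_iff.mp hx
  obtain ⟨k, hk, hmax⟩ :=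
    (Finset.univ.filter (x · ≠ 0)).exists_max_image id ⟨i, by simpa using hi⟩
  refine ⟨k, by simpa using hk, fun i hki => ?_⟩
  by_contra hi
  exact (hmax i (by simpa using hi)).not_gt hki

theorem dvd_mul_of_sum_mul_eq_zero {ι R : Type*} [Fintype ι] [LinearOrder ι] [CommRing R]
    {a x : ι → R} {m : R} {k : ι} (hsum : ∑ i, a i * x i = 0) (hlast : ∀ i, k < i → x i = 0)
    (hdvd : ∀ i, i < k → m ∣ a i) : m ∣ a k * x k := by
  have hk : a k * x k = -∑ i ∈ Finset.univ.erase k, a i * x i := by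
    rw [← Finset.add_sum_erase _ _ (Finset.mem_univ k)] at hsum
    exact eq_neg_of_add_eq_zero_left hsum
  rw [hk, dvd_neg]
  refine Finset.dvd_sum fun i hi => ?_
  rcases lt_or_gt_of_ne (Finset.ne_of_mem_erase hi) with hik | hki
  · exact (hdvd i hik).mul_right _
  · simp [hlast i hki]

theorem Int.dvd_of_gcd_pow_eq_pow {n : ℕ} {a x : ℤ} {m j : ℕ} (hn : 0 < n) (hjm : j < m)
    (hgcd : Int.gcd ((n : ℤ) ^ m) a = n ^ j) (hdvd : (n : ℤ) ^ (j + 1) ∣ a * x) :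
    (n : ℤ) ∣ x := by
  obtain ⟨b, rfl⟩ : (n : ℤ) ^ j ∣ a := by exact_mod_cast hgcd ▸ Int.gcd_dvd_right ((n : ℤ) ^ m) a
  have hcop : IsCoprime (n : ℤ) b := by
    rw [← IsCoprime.pow_left_iff (Nat.sub_pos_of_lt hjm), Int.isCoprime_iff_gcd_eq_one]
    rw [← Nat.add_sub_of_le hjm.le, pow_add, Int.gcd_mul_left, Int.natAbs_pow,
      Int.natAbs_natCast] at hgcd
    exact (Nat.mul_eq_left (by positivity)).mp hgcd
  rw [pow_succ, mul_assoc] at hdvd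
  exact hcop.dvd_of_dvd_mul_left ((mul_dvd_mul_iff_left (by positivity)).mp hdvd)

theorem Int.sq_add_sq_le_gcd_sq_mul {a₀ a₁ x₀ x₁ : ℤ} (h : a₀ * x₀ + a₁ * x₁ = 0)
    (hx : x₀ ≠ 0 ∨ x₁ ≠ 0) :
    a₀ ^ 2 + a₁ ^ 2 ≤ (Int.gcd a₀ a₁ : ℤ) ^ 2 * (x₀ ^ 2 + x₁ ^ 2) := by
  rcases Nat.eq_zero_or_pos (Int.gcd a₀ a₁) with hg | hg
  · obtain ⟨rfl, rfl⟩ := Int.gcd_eq_zero_iff.mp hg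
    simp
  obtain ⟨b₀, b₁, hb, ha₀, ha₁⟩ := Int.exists_gcd_one hg
  set g : ℤ := (Int.gcd a₀ a₁ : ℤ)
  have hb' : b₀ * x₀ + b₁ * x₁ = 0 := by
    have : g * (b₀ * x₀ + b₁ * x₁) = 0 := by rw [ha₀, ha₁] at h; linear_combination h
    exact (mul_eq_zero.mp this).resolve_left (by positivity)
  obtain ⟨u, v, huv⟩ := Int.isCoprime_iff_gcd_eq_one.mpr hb
  -- `(x₀, x₁) = t • (-b₁, b₀)`, with `t` read off a Bézout relation `u b₀ + v b₁ = 1`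
  set t := u * x₁ - v * x₀
  have hx₀ : x₀ = -b₁ * t := by linear_combination u * hb' - x₀ * huv
  have hx₁ : x₁ = b₀ * t := by linear_combination v * hb' - x₁ * huv
  have ht : t ≠ 0 := by
    rintro ht
    simp [hx₀, hx₁, ht] at hx
  rw [ha₀, ha₁, hx₀, hx₁]
  calc (b₀ * g) ^ 2 + (b₁ * g) ^ 2 = g ^ 2 * (b₀ ^ 2 + b₁ ^ 2) * 1 := by ring
    _ ≤ g ^ 2 * (b₀ ^ 2 + b₁ ^ 2) * t ^ 2 := by
      gcongr
      exact (one_le_sq_iff_one_le_abs t).mpr (Int.one_le_abs ht)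
    _ = g ^ 2 * ((-b₁ * t) ^ 2 + (b₀ * t) ^ 2) := by ring

theorem Int.sq_le_sq_add_sq_of_gcd_eq_pow {n j : ℕ} {a₀ a₁ x₀ x₁ : ℤ} (hn : 0 < n)
    (h : a₀ * x₀ + a₁ * x₁ = 0) (hx : x₀ ≠ 0 ∨ x₁ ≠ 0) (hgcd : Int.gcd a₀ a₁ = n ^ j)
    (hnorm : ((n : ℤ) ^ (j + 1)) ^ 2 ≤ a₀ ^ 2 + a₁ ^ 2) :
    (n : ℤ) ^ 2 ≤ x₀ ^ 2 + x₁ ^ 2 := by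
  have hupper := Int.sq_add_sq_le_gcd_sq_mul h hx
  rw [hgcd, Nat.cast_pow] at hupper
  rw [pow_succ _ j, mul_pow] at hnorm
  exact le_of_mul_le_mul_left (hnorm.trans hupper) (by positivity)

theorem stmt3 (d lam : ℕ) (hd : 3 ≤ d) (hlam : 0 < lam) (a : Fin d → ℤ)
    (hgcd : ∀ i : Fin d, 2 ≤ (i : ℕ) →
      Int.gcd ((lam : ℤ) ^ d) (a i) = lam ^ (d - 1 - (i : ℕ)))
    (h12 : Int.gcd (a ⟨0, by omega⟩) (a ⟨1, by omega⟩) = lam ^ (d - 2))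
    (hnorm : Real.sqrt (((a ⟨0, by omega⟩ : ℤ) : ℝ) ^ 2 + ((a ⟨1, by omega⟩ : ℤ) : ℝ) ^ 2)
      ≥ (lam : ℝ) ^ (d - 1)) :
    ∀ x : Fin d → ℤ, x ≠ 0 → (∑ i, a i * x i) = 0 →
      Real.sqrt (∑ i, ((x i : ℝ)) ^ 2) ≥ (lam : ℝ) := by
  intro x hx hsum
  set i₀ : Fin d := ⟨0, by omega⟩
  set i₁ : Fin d := ⟨1, by omega⟩
  suffices h : (lam : ℤ) ^ 2 ≤ ∑ i, x i ^ 2 by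
    rw [ge_iff_le, Real.le_sqrt' (by exact_mod_cast hlam)]
    exact_mod_cast h
  have hdvd₀ : (lam : ℤ) ^ (d - 2) ∣ a i₀ := by exact_mod_cast h12 ▸ Int.gcd_dvd_left _ _
  have hdvd₁ : (lam : ℤ) ^ (d - 2) ∣ a i₁ := by exact_mod_cast h12 ▸ Int.gcd_dvd_right _ _
  obtain ⟨k, hxk, hlast⟩ := exists_last_ne_zero hx
  by_cases hk : 2 ≤ (k : ℕ)
  · have hdvd : (lam : ℤ) ^ (d - 1 - k + 1) ∣ a k * x k := by
      refine dvd_mul_of_sum_mul_eq_zero hsum hlast fun i hik => ?_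
      rw [Fin.lt_def] at hik
      by_cases hi : 2 ≤ (i : ℕ)
      · have hdvdi : (lam : ℤ) ^ (d - 1 - i) ∣ a i := by
          exact_mod_cast hgcd i hi ▸ Int.gcd_dvd_right _ _
        exact (pow_dvd_pow _ (by omega)).trans hdvdi
      · obtain rfl | rfl : i = i₀ ∨ i = i₁ := by simp only [Fin.ext_iff, i₀, i₁]; omega
        · exact (pow_dvd_pow _ (by omega)).trans hdvd₀
        · exact (pow_dvd_pow _ (by omega)).trans hdvd₁
    have hlam_dvd : (lam : ℤ) ∣ x k := Int.dvd_of_gcd_pow_eq_pow hlam (by omega) (hgcd k hk) hdvd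
    calc (lam : ℤ) ^ 2 ≤ x k ^ 2 := Int.le_of_dvd (by positivity) (pow_dvd_pow_of_dvd hlam_dvd 2)
      _ ≤ ∑ i, x i ^ 2 := Finset.single_le_sum (fun i _ => sq_nonneg _) (Finset.mem_univ k)
  · have hzero : ∀ i, i ≠ i₀ ∧ i ≠ i₁ → x i = 0 := fun i hi => hlast i <| by
      simp only [ne_eq, Fin.ext_iff, i₀, i₁] at hi
      rw [Fin.lt_def]; omega
    have hne : i₀ ≠ i₁ := by simp [i₀, i₁, Fin.ext_iff]
    rw [Fintype.sum_eq_add i₀ i₁ hne fun i hi => by simp [hzero i hi]] at hsum ⊢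
    have hx₀₁ : x i₀ ≠ 0 ∨ x i₁ ≠ 0 := by
      obtain rfl | rfl : k = i₀ ∨ k = i₁ := by simp only [Fin.ext_iff, i₀, i₁]; omega
      exacts [.inl hxk, .inr hxk]
    have hnorm' : ((lam : ℤ) ^ (d - 2 + 1)) ^ 2 ≤ a i₀ ^ 2 + a i₁ ^ 2 := by
      rw [show d - 2 + 1 = d - 1 by omega]
      exact_mod_cast (Real.le_sqrt' (by positivity)).mp hnorm
    exact Int.sq_le_sq_add_sq_of_gcd_eq_pow hlam hsum hx₀₁ h12 hnorm'
end

section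
/- Let α₀ be a hyperplane in ℝ^d through the origin with basis y₁,…,y_{d−1}, and let a₀ be a normal vector of α₀. For each 1 ≤ i ≤ d−1 let h_i be the projection of y_i onto the orthogonal complement of Span(y₁,…,y_{i−1},y_{i+1},…,y_{d−1}) within α₀ (assume h_i ≠ 0), set θ_i = arcsin(‖h_i‖^{−1}) assuming ‖h_i‖ ≥ 1, and let a_i be the unit vector obtained by rotating a₀/‖a₀‖ towards h_i by angle θ_i in the plane Span(a₀, h_i). Then for every x = x₁y₁ + ⋯ + x_{d−1}y_{d−1} ∈ α₀ and every 1 ≤ i ≤ d−1, the inner product a_i · x equals x_i. -/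
/-!
The vector `h i` is orthogonal to every `y j` with `j ≠ i`, and `⟪h i, y i⟫ = ‖h i‖ ^ 2` because
`y i - h i` is orthogonal to `h i`. Hence `‖h i‖⁻² • h i` is the dual vector of `y i` against the
family `y`; adding any multiple of the normal vector `a₀` does not change its inner products with
the `y j`, so `⟪a i, y j⟫ = δ_{ij}` and the claim follows by linearity.
-/

open scoped RealInnerProductSpace

open Submodule

variable {E : Type*} [NormedAddCommGroup E] [InnerProductSpace ℝ E]

theorem Submodule.real_inner_starProjection_self (K : Submodule ℝ E) [K.HasOrthogonalProjection]
    (v : E) : ⟪K.starProjection v, v⟫ = ‖K.starProjection v‖ ^ 2 := by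
  simpa using K.re_inner_starProjection_eq_normSq v

theorem real_inner_starProjection_orthogonal_span_ne {ι : Type*} [DecidableEq ι] (y : ι → E)
    (i : ι) [(span ℝ (y '' {k | k ≠ i}))ᗮ.HasOrthogonalProjection] (j : ι) :
    ⟪(span ℝ (y '' {k | k ≠ i}))ᗮ.starProjection (y i), y j⟫ =
      if j = i then ‖(span ℝ (y '' {k | k ≠ i}))ᗮ.starProjection (y i)‖ ^ 2 else 0 := by
  split_ifs with hji
  · subst hji
    exact real_inner_starProjection_self _ _
  · exact inner_left_of_mem_orthogonal (subset_span (Set.mem_image_of_mem y hji))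
      (starProjection_apply_mem _ _)

theorem real_inner_sum_smul_of_inner_eq_ite {ι : Type*} [Fintype ι] [DecidableEq ι] {a : E}
    {y : ι → E} {i : ι} (hay : ∀ j, ⟪a, y j⟫ = if j = i then 1 else 0) (x : ι → ℝ) :
    ⟪a, ∑ j, x j • y j⟫ = x i := by
  simp [inner_sum, real_inner_smul_right, hay]

theorem stmt10_general (d : ℕ)
    (y : Fin (d - 1) → EuclideanSpace ℝ (Fin d))
    (a₀ : EuclideanSpace ℝ (Fin d))
    (horth : ∀ j, ⟪a₀, y j⟫ = 0)
    (h : Fin (d - 1) → EuclideanSpace ℝ (Fin d))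
    (hh : ∀ i, h i =
      (Submodule.orthogonalProjectionOnto ((Submodule.span ℝ (y '' {j | j ≠ i}))ᗮ) (y i) :
        EuclideanSpace ℝ (Fin d)))
    (hne : ∀ i, h i ≠ 0)
    (a : Fin (d - 1) → EuclideanSpace ℝ (Fin d))
    (ha : ∀ i, a i = Real.sqrt (1 - (‖h i‖⁻¹) ^ 2) • (‖a₀‖⁻¹ • a₀)
      + (‖h i‖⁻¹ * ‖h i‖⁻¹) • h i) :
    ∀ (x : Fin (d - 1) → ℝ) (i : Fin (d - 1)),
      ⟪a i, ∑ j, x j • y j⟫ = x i := by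
  intro x i
  refine real_inner_sum_smul_of_inner_eq_ite (fun j ↦ ?_) x
  have hhy : ⟪h i, y j⟫ = if j = i then ‖h i‖ ^ 2 else 0 := by
    rw [hh i, coe_orthogonalProjectionOnto_apply]
    exact real_inner_starProjection_orthogonal_span_ne y i j
  have hnorm : ‖h i‖ ≠ 0 := norm_ne_zero_iff.mpr (hne i)
  rw [ha i, inner_add_left, real_inner_smul_left, real_inner_smul_left, real_inner_smul_left,
    horth j, mul_zero, mul_zero, zero_add, hhy]
  split_ifs
  · field_simp
  · exact mul_zero _

theorem stmt10 (d : ℕ) (hd : 2 ≤ d)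
    (y : Fin (d - 1) → EuclideanSpace ℝ (Fin d))
    (hli : LinearIndependent ℝ y)
    (a₀ : EuclideanSpace ℝ (Fin d)) (ha₀ : a₀ ≠ 0)
    (horth : ∀ j, ⟪a₀, y j⟫ = 0)
    (h : Fin (d - 1) → EuclideanSpace ℝ (Fin d))
    (hh : ∀ i, h i =
      (Submodule.orthogonalProjectionOnto ((Submodule.span ℝ (y '' {j | j ≠ i}))ᗮ) (y i) :
        EuclideanSpace ℝ (Fin d)))
    (hne : ∀ i, h i ≠ 0) (hbig : ∀ i, 1 ≤ ‖h i‖)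
    (a : Fin (d - 1) → EuclideanSpace ℝ (Fin d))
    (ha : ∀ i, a i = Real.sqrt (1 - (‖h i‖⁻¹) ^ 2) • (‖a₀‖⁻¹ • a₀)
      + (‖h i‖⁻¹ * ‖h i‖⁻¹) • h i) :
    ∀ (x : Fin (d - 1) → ℝ) (i : Fin (d - 1)),
      ⟪a i, ∑ j, x j • y j⟫ = x i :=
  stmt10_general d y a₀ horth h hh hne a ha
end

section
/- Every convex lattice polygon contained in the square [0,n]² has at most C·n^{2/3} vertices for some absolute constant C and sufficiently large n. -/
/-!
Walking around the polygon counterclockwise, the edge vectors `v₁, …, v_k` are nonzero integer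
vectors with pairwise distinct directions. Each edge projects onto the two axes, and the edges
going right (resp. up, left, down) have disjoint projections, so the ℓ¹-perimeter `∑ ‖vᵢ‖₁` is at
most `4n`. Replacing each `vᵢ` by its primitive part keeps the vectors distinct and shortens
them. Among distinct integer vectors at most `(2t+1)²` have ℓ¹-norm `≤ t`, and the others number
at most `4n / (t+1)`; the choice `t ≈ n^{1/3}` gives `k ≤ 13 n^{2/3}`.
-/

open Finset

namespace LatticePolygon

section Cross

variable {R : Type*} [CommRing R]

def cross (a b : R × R) : R := a.1 * b.2 - a.2 * b.1

def dot (a b : R × R) : R := a.1 * b.1 + a.2 * b.2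

@[simp] lemma cross_self (a : R × R) : cross a a = 0 := by
  simp only [cross]; ring

lemma cross_neg_right (a b : R × R) : cross a (-b) = -cross a b := by
  simp only [cross, Prod.fst_neg, Prod.snd_neg]; ring

lemma cross_smul_left (c : R) (a b : R × R) : cross (c • a) b = c * cross a b := by
  simp only [cross, Prod.smul_fst, Prod.smul_snd, smul_eq_mul]; ring

lemma dot_mul_cross (u a b : R × R) :
    dot u u * cross a b = dot u b * cross a u - dot u a * cross b u := by
  simp only [dot, cross]; ring

lemma dot_smul_sub_dot_smul (u a b : R × R) :
    dot u a • b - dot u b • a = cross a b • (-u.2, u.1) := by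
  ext <;> simp only [dot, cross, Prod.fst_sub, Prod.snd_sub, Prod.smul_fst, Prod.smul_snd,
    smul_eq_mul] <;> ring

end Cross

lemma mem_openSegment_of_smul_eq {E : Type*} [AddCommGroup E] [Module ℝ E] {p a b : E} {s t : ℝ}
    (ht : 0 < t) (hts : t < s) (h : s • b = t • a) : p + b ∈ openSegment ℝ p (p + a) := by
  have hs : s ≠ 0 := by linarith
  refine ⟨1 - t / s, t / s, by rw [sub_pos, div_lt_one (by linarith)]; exact hts,
    div_pos ht (by linarith), by ring, ?_⟩
  rw [smul_add, ← add_assoc, ← add_smul, sub_add_cancel, one_smul, div_eq_inv_mul, mul_smul,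
    ← h, smul_smul, inv_mul_cancel₀ hs, one_smul]

lemma linearMap_apply_eq_dot (f : ℝ × ℝ →ₗ[ℝ] ℝ) (v : ℝ × ℝ) :
    f v = dot (f (1, 0), f (0, 1)) v := by
  calc f v = f (v.1 • (1, 0) + v.2 • (0, 1)) := by congr 1; ext <;> simp
    _ = dot (f (1, 0), f (0, 1)) v := by
        rw [map_add, map_smul, map_smul, smul_eq_mul, smul_eq_mul, dot]; ring

lemma exists_dot_neg_of_mem_extremePoints {S : Set (ℝ × ℝ)} (hS : S.Finite) {p : ℝ × ℝ}
    (hp : p ∈ (convexHull ℝ S).extremePoints ℝ) : ∃ u, ∀ r ∈ S, r ≠ p → dot u (r - p) < 0 := by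
  have hsep : p ∉ convexHull ℝ (S \ {p}) := fun h =>
    ((convex_convexHull ℝ _).mem_extremePoints_iff_mem_sdiff_convexHull_sdiff.1 hp).2
      (convexHull_mono (Set.sdiff_subset_sdiff_left (subset_convexHull ℝ _)) h)
  obtain ⟨f, c, hfc, hcp⟩ := geometric_hahn_banach_closed_point (convex_convexHull ℝ _)
    (hS.sdiff.isCompact_convexHull ℝ).isClosed hsep
  refine ⟨(f (1, 0), f (0, 1)), fun r hr hrp => ?_⟩
  have hfr := hfc r (subset_convexHull ℝ _ ⟨hr, hrp⟩)
  have hlin : f (r - p) = dot (f (1, 0), f (0, 1)) (r - p) :=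
    linearMap_apply_eq_dot f.toLinearMap (r - p)
  rw [← hlin, map_sub]
  linarith

/-- Otherwise `q` and `r` lie on a common ray from `p`, and the one nearer to `p` lies between `p`
and the other. -/
lemma cross_ne_zero_of_dot_neg {A : Set (ℝ × ℝ)} {u p q r : ℝ × ℝ} (hp : p ∈ A)
    (hq : q ∈ A.extremePoints ℝ) (hr : r ∈ A.extremePoints ℝ) (hqr : q ≠ r)
    (hq' : dot u (q - p) < 0) (hr' : dot u (r - p) < 0) : cross (q - p) (r - p) ≠ 0 := by
  intro h0
  have hray : (-dot u (q - p)) • (r - p) = (-dot u (r - p)) • (q - p) := by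
    rw [neg_smul, neg_smul, neg_inj, ← sub_eq_zero, dot_smul_sub_dot_smul, h0, zero_smul]
  rcases lt_trichotomy (-dot u (r - p)) (-dot u (q - p)) with hlt | heq | hgt
  · have hseg := mem_openSegment_of_smul_eq (p := p) (neg_pos.2 hr') hlt hray
    rw [add_sub_cancel, add_sub_cancel] at hseg
    have hpr := ((mem_extremePoints.1 hr).2 p hp q hq.1 hseg).1
    simp [hpr, dot] at hr'
  · rw [heq] at hray
    exact hqr (sub_left_injective (smul_right_injective _ (neg_pos.2 hq').ne' hray)).symm
  · have hseg := mem_openSegment_of_smul_eq (p := p) (neg_pos.2 hq') hgt hray.symm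
    rw [add_sub_cancel, add_sub_cancel] at hseg
    have hpq := ((mem_extremePoints.1 hq).2 p hp r hr.1 hseg).1
    simp [hpq, dot] at hq'

/-- The other points lie in an open half-plane at `p`; `q` is the one minimizing the angle to the
boundary of that half-plane. -/
lemma exists_cross_pos_of_forall_mem_extremePoints (S : Finset (ℝ × ℝ))
    (hS : ∀ x ∈ S, x ∈ (convexHull ℝ (S : Set (ℝ × ℝ))).extremePoints ℝ) {p : ℝ × ℝ}
    (hp : p ∈ S) (hS₂ : (S.erase p).Nonempty) :
    ∃ q ∈ S, q ≠ p ∧ ∀ r ∈ S, r ≠ p → r ≠ q → 0 < cross (q - p) (r - p) := by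
  obtain ⟨u, hu⟩ := exists_dot_neg_of_mem_extremePoints S.finite_toSet (hS p hp)
  obtain ⟨q, hq, hmin⟩ := (S.erase p).exists_min_image
    (fun r => cross (r - p) u / -dot u (r - p)) hS₂
  obtain ⟨hqp, hqS⟩ := mem_erase.1 hq
  refine ⟨q, hqS, hqp, fun r hr hrp hrq => ?_⟩
  have hq' := hu q hqS hqp
  have hr' := hu r hr hrp
  have huu : 0 < dot u u := by
    by_contra! h
    have h₁ : u.1 = 0 := by simp only [dot] at h; nlinarith
    have h₂ : u.2 = 0 := by simp only [dot] at h; nlinarith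
    simp [dot, h₁, h₂] at hq'
  have hnonneg : 0 ≤ cross (q - p) (r - p) := by
    have := hmin r (mem_erase.2 ⟨hrp, hr⟩)
    rw [div_le_div_iff₀ (neg_pos.2 hq') (neg_pos.2 hr')] at this
    refine nonneg_of_mul_nonneg_right ?_ huu
    rw [dot_mul_cross]
    linarith
  have hA := subset_convexHull ℝ (S : Set (ℝ × ℝ))
  exact lt_of_le_of_ne hnonneg (cross_ne_zero_of_dot_neg (hA hp) (hS q hqS) (hS r hr)
    (Ne.symm hrq) hq' hr').symm

def toReal (q : ℤ × ℤ) : ℝ × ℝ := (q.1, q.2)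

lemma toReal_injective : Function.Injective toReal := fun a b h => by
  simp only [toReal, Prod.mk.injEq, Int.cast_inj] at h
  exact Prod.ext h.1 h.2

lemma cast_cross_sub (p q r : ℤ × ℤ) :
    ((cross (q - p) (r - p) : ℤ) : ℝ) = cross (toReal q - toReal p) (toReal r - toReal p) := by
  simp only [cross, toReal, Prod.fst_sub, Prod.snd_sub]; push_cast; ring

/-- `σ p` is the vertex following `p` counterclockwise: all other vertices lie strictly to the
left of the edge from `p` to `σ p`. -/
structure IsConvexSuccessor (V : Finset (ℤ × ℤ)) (σ : ℤ × ℤ → ℤ × ℤ) : Prop where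
  mem : ∀ p ∈ V, σ p ∈ V
  ne : ∀ p ∈ V, σ p ≠ p
  cross_pos : ∀ p ∈ V, ∀ r ∈ V, r ≠ p → r ≠ σ p → 0 < cross (σ p - p) (r - p)

lemma exists_isConvexSuccessor (V : Finset (ℤ × ℤ)) (hV : 1 < #V)
    (hext : ∀ p ∈ V, toReal p ∈ (convexHull ℝ (toReal '' (V : Set (ℤ × ℤ)))).extremePoints ℝ) :
    ∃ σ, IsConvexSuccessor V σ := by
  have hS : ∀ x ∈ V.image toReal, x ∈ (convexHull ℝ ((V.image toReal : Finset (ℝ × ℝ)) :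
      Set (ℝ × ℝ))).extremePoints ℝ := fun x hx => by
    obtain ⟨p, hp, rfl⟩ := mem_image.1 hx
    rw [coe_image]
    exact hext p hp
  have hsucc : ∀ p ∈ V, ∃ q, q ∈ V ∧ q ≠ p ∧ ∀ r ∈ V, r ≠ p → r ≠ q →
      0 < cross (q - p) (r - p) := fun p hp => by
    obtain ⟨q₀, hq₀, hq₀p⟩ := exists_mem_ne hV p
    obtain ⟨_, hq, hqp, hcross⟩ := exists_cross_pos_of_forall_mem_extremePoints _ hS
      (mem_image_of_mem toReal hp)
      ⟨toReal q₀, mem_erase.2 ⟨toReal_injective.ne hq₀p, mem_image_of_mem toReal hq₀⟩⟩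
    obtain ⟨q, hqV, rfl⟩ := mem_image.1 hq
    refine ⟨q, hqV, fun h => hqp (h ▸ rfl), fun r hr hrp hrq => ?_⟩
    have := hcross (toReal r) (mem_image_of_mem toReal hr) (toReal_injective.ne hrp)
      (toReal_injective.ne hrq)
    rw [← cast_cross_sub] at this
    exact_mod_cast this
  choose! σ hσV hσp hσ using hsucc
  exact ⟨σ, hσV, hσp, hσ⟩

def normL1 (v : ℤ × ℤ) : ℤ := |v.1| + |v.2|

def primitivePart (v : ℤ × ℤ) : ℤ × ℤ := (v.1 / v.1.gcd v.2, v.2 / v.1.gcd v.2)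

lemma exists_pos_smul_primitivePart {v : ℤ × ℤ} (hv : v ≠ 0) :
    ∃ g : ℤ, 0 < g ∧ g • primitivePart v = v :=
  ⟨v.1.gcd v.2, Int.natCast_pos.2 (Int.gcd_pos_iff.2 (by contrapose! hv; exact Prod.ext hv.1 hv.2)),
    Prod.ext (Int.mul_ediv_cancel' (Int.gcd_dvd_left _ _))
      (Int.mul_ediv_cancel' (Int.gcd_dvd_right _ _))⟩

lemma normL1_primitivePart_le (v : ℤ × ℤ) : normL1 (primitivePart v) ≤ normL1 v :=
  add_le_add (Int.abs_ediv_le_abs _ _) (Int.abs_ediv_le_abs _ _)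

lemma affine_pos_of_mem_Icc {α β x₁ x₂ x : ℤ} (hx : x ∈ Icc x₁ x₂)
    (h₁ : 0 < α + β * x₁) (h₂ : 0 < α + β * x₂) : 0 < α + β * x := by
  rw [mem_Icc] at hx
  rcases le_total 0 β with hβ | hβ <;> nlinarith

namespace IsConvexSuccessor

variable {V : Finset (ℤ × ℤ)} {σ : ℤ × ℤ → ℤ × ℤ} {p r : ℤ × ℤ}

lemma cross_nonneg (h : IsConvexSuccessor V σ) (hp : p ∈ V) (hr : r ∈ V) :
    0 ≤ cross (σ p - p) (r - p) := by
  by_cases hrp : r = p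
  · simp [hrp, cross]
  by_cases hrσ : r = σ p
  · simp [hrσ]
  exact (h.cross_pos p hp r hr hrp hrσ).le

lemma injOn (h : IsConvexSuccessor V σ) : Set.InjOn σ V := by
  intro p hp p' hp' hσ
  by_contra hpp'
  have h₁ := h.cross_pos p hp p' hp' (Ne.symm hpp') (hσ ▸ (h.ne p' hp').symm)
  have h₂ := h.cross_pos p' hp' p hp hpp' (hσ ▸ (h.ne p hp).symm)
  rw [← hσ] at h₂
  have : cross (σ p - p') (p - p') = -cross (σ p - p) (p' - p) := by
    simp only [cross, Prod.fst_sub, Prod.snd_sub]; ring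
  linarith

lemma image_eq (h : IsConvexSuccessor V σ) : V.image σ = V :=
  eq_of_subset_of_card_le (image_subset_iff.2 h.mem) (card_image_of_injOn h.injOn).ge

lemma sum_fst_sub_eq_zero (h : IsConvexSuccessor V σ) : ∑ p ∈ V, ((σ p).1 - p.1) = 0 := by
  rw [sum_sub_distrib, ← sum_image (f := Prod.fst) h.injOn, h.image_eq, sub_self]

/-- At a common abscissa each of the two edges would lie strictly above the other one. -/
lemma disjoint_Ioc_fst (h : IsConvexSuccessor V σ) {p p' : ℤ × ℤ} (hp : p ∈ V) (hp' : p' ∈ V)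
    (hpp' : p ≠ p') (hlt : p.1 < (σ p).1) (hlt' : p'.1 < (σ p').1) :
    Disjoint (Ioc p.1 (σ p).1) (Ioc p'.1 (σ p').1) := by
  rw [disjoint_left]
  intro x hx hx'
  rw [mem_Ioc] at hx hx'
  set q := σ p
  set q' := σ p'
  have hqp' : q ≠ p' := fun heq => by rw [heq] at hx; omega
  have hq'p : q' ≠ p := fun heq => by rw [heq] at hx'; omega
  have hqq' : q ≠ q' := fun heq => hpp' (h.injOn hp hp' heq)
  have c₁ := h.cross_pos p hp p' hp' hpp'.symm hqp'.symm
  have c₂ := h.cross_pos p hp q' (h.mem p' hp') hq'p hqq'.symm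
  have c₃ := h.cross_pos p' hp' p hp hpp' hq'p.symm
  have c₄ := h.cross_pos p' hp' q (h.mem p hp) hqp' hqq'
  -- `α + β * x` is `(q - p).1 * (q' - p').1` times the height of `p' q'` above `p q` at `x`
  set α := (q - p).1 * ((q' - p').1 * p'.2 - (q' - p').2 * p'.1)
    - (q' - p').1 * ((q - p).1 * p.2 - (q - p).2 * p.1) with hα
  set β := (q - p).1 * (q' - p').2 - (q' - p').1 * (q - p).2 with hβ
  have hd : 0 < (q - p).1 := by rw [Prod.fst_sub]; omega
  have he : 0 < (q' - p').1 := by rw [Prod.fst_sub]; omega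
  have v₁ : α + β * p'.1 = (q' - p').1 * cross (q - p) (p' - p) := by
    simp only [hα, hβ, cross, Prod.fst_sub, Prod.snd_sub]; ring
  have v₂ : α + β * q'.1 = (q' - p').1 * cross (q - p) (q' - p) := by
    simp only [hα, hβ, cross, Prod.fst_sub, Prod.snd_sub]; ring
  have v₃ : -α + -β * p.1 = (q - p).1 * cross (q' - p') (p - p') := by
    simp only [hα, hβ, cross, Prod.fst_sub, Prod.snd_sub]; ring
  have v₄ : -α + -β * q.1 = (q - p).1 * cross (q' - p') (q - p') := by
    simp only [hα, hβ, cross, Prod.fst_sub, Prod.snd_sub]; ring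
  have above := affine_pos_of_mem_Icc (mem_Icc.2 ⟨hx'.1.le, hx'.2⟩)
    (v₁ ▸ mul_pos he c₁) (v₂ ▸ mul_pos he c₂)
  have below := affine_pos_of_mem_Icc (mem_Icc.2 ⟨hx.1.le, hx.2⟩)
    (v₃ ▸ mul_pos hd c₃) (v₄ ▸ mul_pos hd c₄)
  linarith

lemma sum_pos_fst_le (h : IsConvexSuccessor V σ) {a b : ℤ} (hab : a ≤ b)
    (hV : ∀ p ∈ V, p.1 ∈ Icc a b) :
    ∑ p ∈ V with p.1 < (σ p).1, ((σ p).1 - p.1) ≤ b - a := by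
  calc ∑ p ∈ V with p.1 < (σ p).1, ((σ p).1 - p.1)
      = ∑ p ∈ V with p.1 < (σ p).1, (#(Ioc p.1 (σ p).1) : ℤ) :=
        sum_congr rfl fun p hp => (Int.card_Ioc_of_le _ _ (mem_filter.1 hp).2.le).symm
    _ = #((V.filter fun p => p.1 < (σ p).1).biUnion fun p => Ioc p.1 (σ p).1) := by
        rw [card_biUnion fun p hp p' hp' hpp' =>
          h.disjoint_Ioc_fst (mem_filter.1 hp).1 (mem_filter.1 hp').1 hpp'
            (mem_filter.1 hp).2 (mem_filter.1 hp').2]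
        push_cast; rfl
    _ ≤ #(Ioc a b) := by
        gcongr
        refine biUnion_subset.2 fun p hp => Ioc_subset_Ioc ?_ ?_
        · exact (mem_Icc.1 (hV p (mem_filter.1 hp).1)).1
        · exact (mem_Icc.1 (hV _ (h.mem p (mem_filter.1 hp).1))).2
    _ = b - a := Int.card_Ioc_of_le _ _ hab

lemma sum_abs_fst_le (h : IsConvexSuccessor V σ) {a b : ℤ} (hab : a ≤ b)
    (hV : ∀ p ∈ V, p.1 ∈ Icc a b) :
    ∑ p ∈ V, |(σ p).1 - p.1| ≤ 2 * (b - a) := by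
  have habs : ∀ x : ℤ, |x| = 2 * (if 0 < x then x else 0) - x := fun x => by
    split_ifs with hx
    · rw [abs_of_pos hx]; ring
    · rw [abs_of_nonpos (not_lt.1 hx)]; ring
  calc ∑ p ∈ V, |(σ p).1 - p.1|
      = 2 * ∑ p ∈ V with p.1 < (σ p).1, ((σ p).1 - p.1) - ∑ p ∈ V, ((σ p).1 - p.1) := by
        rw [sum_filter, mul_sum, ← sum_sub_distrib]
        exact sum_congr rfl fun p _ => by simp only [habs, sub_pos]
    _ ≤ 2 * (b - a) := by
        rw [h.sum_fst_sub_eq_zero]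
        linarith [h.sum_pos_fst_le hab hV]

lemma map (h : IsConvexSuccessor V σ) (e : ℤ × ℤ ≃ ℤ × ℤ)
    (he : ∀ a b c, cross (e b - e a) (e c - e a) = cross (b - a) (c - a)) :
    IsConvexSuccessor (V.map e.toEmbedding) (e ∘ σ ∘ e.symm) where
  mem z hz := by
    rw [mem_map_equiv] at hz ⊢
    simpa using h.mem _ hz
  ne z hz := by
    obtain ⟨x, rfl⟩ := e.surjective z
    rw [mem_map_equiv, e.symm_apply_apply] at hz
    simpa using h.ne x hz
  cross_pos z hz w hw hwz hwσ := by
    obtain ⟨x, rfl⟩ := e.surjective z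
    obtain ⟨y, rfl⟩ := e.surjective w
    rw [mem_map_equiv, e.symm_apply_apply] at hz hw
    simp only [Function.comp_apply, e.symm_apply_apply, ne_eq, EmbeddingLike.apply_eq_iff_eq,
      he] at hwz hwσ ⊢
    exact h.cross_pos x hz y hw hwz hwσ

lemma sum_abs_snd_le (h : IsConvexSuccessor V σ) {a b : ℤ} (hab : a ≤ b)
    (hV : ∀ p ∈ V, p.2 ∈ Icc a b) :
    ∑ p ∈ V, |(σ p).2 - p.2| ≤ 2 * (b - a) := by
  let rotate : ℤ × ℤ ≃ ℤ × ℤ :=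
    ⟨fun v => (v.2, -v.1), fun v => (-v.2, v.1), fun v => by simp, fun v => by simp⟩
  have hrot := h.map rotate fun _ _ _ => by
    simp only [rotate, cross, Equiv.coe_fn_mk, Prod.fst_sub, Prod.snd_sub]; ring
  have := hrot.sum_abs_fst_le hab fun z hz => by
    obtain ⟨p, rfl⟩ := rotate.surjective z
    rw [mem_map_equiv, rotate.symm_apply_apply] at hz
    exact hV p hz
  simpa [rotate] using this

lemma sum_normL1_le (h : IsConvexSuccessor V σ) {a b : ℤ × ℤ} (hab : a ≤ b)
    (hV : ∀ p ∈ V, p ∈ Icc a b) :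
    ∑ p ∈ V, normL1 (σ p - p) ≤ 2 * (b.1 - a.1) + 2 * (b.2 - a.2) := by
  simp only [normL1, sum_add_distrib, Prod.fst_sub, Prod.snd_sub]
  have hV' : ∀ p ∈ V, p.1 ∈ Icc a.1 b.1 ∧ p.2 ∈ Icc a.2 b.2 := fun p hp => by
    simpa [Prod.le_def, and_and_and_comm] using hV p hp
  exact add_le_add (h.sum_abs_fst_le hab.1 fun p hp => (hV' p hp).1)
    (h.sum_abs_snd_le hab.2 fun p hp => (hV' p hp).2)

/-- Two edges with the same direction would be supporting lines with the polygon on the same side,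
hence the same line. -/
lemma injOn_primitivePart (h : IsConvexSuccessor V σ) :
    Set.InjOn (fun p => primitivePart (σ p - p)) V := by
  intro p hp p' hp' (hw : primitivePart (σ p - p) = primitivePart (σ p' - p'))
  by_contra hpp'
  obtain ⟨g, hg, hd⟩ := exists_pos_smul_primitivePart (sub_ne_zero.2 (h.ne p hp))
  obtain ⟨g', hg', hd'⟩ := exists_pos_smul_primitivePart (sub_ne_zero.2 (h.ne p' hp'))
  rw [← hw] at hd'
  generalize primitivePart (σ p - p) = w at hd hd'
  have left : 0 ≤ cross w (p' - p) := nonneg_of_mul_nonneg_right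
    (by rw [← cross_smul_left, hd]; exact h.cross_nonneg hp hp') hg
  have left' : 0 ≤ cross w (p - p') := nonneg_of_mul_nonneg_right
    (by rw [← cross_smul_left, hd']; exact h.cross_nonneg hp' hp) hg'
  rw [← neg_sub, cross_neg_right] at left'
  have hcol : cross w (p' - p) = 0 := by linarith
  have hσp : σ p = p' := by
    by_contra hne
    have := h.cross_pos p hp p' hp' (Ne.symm hpp') (Ne.symm hne)
    rw [← hd, cross_smul_left, hcol, mul_zero] at this
    exact this.false
  have hσp' : σ p' = p := by
    by_contra hne
    have := h.cross_pos p' hp' p hp hpp' (Ne.symm hne)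
    rw [← hd', cross_smul_left, ← neg_sub p' p, cross_neg_right, hcol, neg_zero, mul_zero] at this
    exact this.false
  have hw0 : w = 0 := by
    have : (g + g') • w = 0 := by
      rw [add_smul, hd, hd', hσp, hσp']
      abel
    exact (smul_eq_zero.1 this).resolve_left (by positivity)
  exact h.ne p hp (sub_eq_zero.1 (by rw [← hd, hw0, smul_zero]))

end IsConvexSuccessor

lemma normL1_nonneg (v : ℤ × ℤ) : 0 ≤ normL1 v := add_nonneg (abs_nonneg _) (abs_nonneg _)

lemma card_filter_normL1_le (W : Finset (ℤ × ℤ)) (t : ℕ) :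
    #{w ∈ W | normL1 w ≤ t} ≤ (2 * t + 1) ^ 2 := by
  calc #{w ∈ W | normL1 w ≤ t} ≤ #(Icc ((-t, -t) : ℤ × ℤ) (t, t)) := by
        refine card_le_card fun w hw => ?_
        have hw := (mem_filter.1 hw).2
        have h₁ := abs_le.1 (le_trans (le_add_of_nonneg_right (abs_nonneg w.2)) hw)
        have h₂ := abs_le.1 (le_trans (le_add_of_nonneg_left (abs_nonneg w.1)) hw)
        simp only [mem_Icc]
        exact ⟨⟨h₁.1, h₂.1⟩, h₁.2, h₂.2⟩
    _ = (2 * t + 1) ^ 2 := by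
        rw [card_Icc_prod, Int.card_Icc, sq]
        congr 1 <;> omega

lemma card_filter_lt_normL1_mul_le (W : Finset (ℤ × ℤ)) (t : ℕ) :
    (#{w ∈ W | t < normL1 w} : ℤ) * (t + 1) ≤ ∑ w ∈ W, normL1 w :=
  calc (#{w ∈ W | t < normL1 w} : ℤ) * (t + 1) = ∑ w ∈ W with t < normL1 w, ((t : ℤ) + 1) := by
        rw [sum_const, nsmul_eq_mul]
    _ ≤ ∑ w ∈ W with t < normL1 w, normL1 w := sum_le_sum fun w hw => (mem_filter.1 hw).2
    _ ≤ ∑ w ∈ W, normL1 w :=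
        sum_le_sum_of_subset_of_nonneg (filter_subset _ _) fun w _ _ => normL1_nonneg w

lemma card_le_of_sum_normL1_le (W : Finset (ℤ × ℤ)) {c x : ℝ} (hx : 1 ≤ x)
    (hW : ((∑ w ∈ W, normL1 w : ℤ) : ℝ) ≤ c * x ^ 3) : (#W : ℝ) ≤ (9 + c) * x ^ 2 := by
  set t := ⌊x⌋₊
  have ht : (t : ℝ) ≤ x := Nat.floor_le (by linarith)
  have ht' : x < t + 1 := Nat.lt_floor_add_one x
  have hsplit := card_filter_add_card_filter_not (s := W) (fun w => normL1 w ≤ t)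
  simp only [not_le] at hsplit
  have hsmall : (#{w ∈ W | normL1 w ≤ t} : ℝ) ≤ 9 * x ^ 2 := by
    have : (#{w ∈ W | normL1 w ≤ t} : ℝ) ≤ (2 * t + 1) ^ 2 := by
      exact_mod_cast card_filter_normL1_le W t
    nlinarith
  have hlarge : (#{w ∈ W | t < normL1 w} : ℝ) ≤ c * x ^ 2 := by
    have : (#{w ∈ W | t < normL1 w} : ℝ) * (t + 1) ≤ c * x ^ 3 :=
      le_trans (by exact_mod_cast card_filter_lt_normL1_mul_le W t) hW
    refine le_of_mul_le_mul_right ?_ (by linarith : (0 : ℝ) < x)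
    nlinarith
  rw [← hsplit, Nat.cast_add]
  linarith

end LatticePolygon

theorem stmt14 :
    ∃ C : ℝ, ∃ N : ℕ, ∀ n : ℕ, N ≤ n →
      ∀ V : Finset (ℤ × ℤ),
        (∀ p ∈ V, 0 ≤ p.1 ∧ p.1 ≤ (n : ℤ) ∧ 0 ≤ p.2 ∧ p.2 ≤ (n : ℤ)) →
        (∀ p ∈ V, ((p.1 : ℝ), (p.2 : ℝ)) ∈ Set.extremePoints ℝ
          (convexHull ℝ ((fun q : ℤ × ℤ => ((q.1 : ℝ), (q.2 : ℝ))) '' (V : Set (ℤ × ℤ))))) →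
        (V.card : ℝ) ≤ C * (n : ℝ) ^ ((2 : ℝ) / 3) := by
  refine ⟨13, 1, fun n hn V hbox hext => ?_⟩
  set x : ℝ := (n : ℝ) ^ ((1 : ℝ) / 3)
  have hx : 1 ≤ x := Real.one_le_rpow (by exact_mod_cast hn) (by norm_num)
  have hx3 : x ^ 3 = n := by
    rw [← Real.rpow_natCast, ← Real.rpow_mul (Nat.cast_nonneg n)]; norm_num
  have hx2 : x ^ 2 = (n : ℝ) ^ ((2 : ℝ) / 3) := by
    rw [← Real.rpow_natCast, ← Real.rpow_mul (Nat.cast_nonneg n)]; norm_num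
  rw [← hx2]
  rcases le_or_gt #V 1 with hV | hV
  · have : (#V : ℝ) ≤ 1 := by exact_mod_cast hV
    nlinarith
  obtain ⟨σ, hσ⟩ := LatticePolygon.exists_isConvexSuccessor V hV hext
  have hperimeter : ∑ p ∈ V, LatticePolygon.normL1 (σ p - p) ≤ 4 * n := by
    have := hσ.sum_normL1_le (a := (0, 0)) (b := (n, n)) (by simp)
      fun p hp => by
        obtain ⟨h₁, h₂, h₃, h₄⟩ := hbox p hp
        exact mem_Icc.2 ⟨⟨h₁, h₃⟩, h₂, h₄⟩
    linarith
  rw [← card_image_of_injOn hσ.injOn_primitivePart]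
  refine (LatticePolygon.card_le_of_sum_normL1_le (c := 4) _ hx ?_).trans_eq (by norm_num)
  rw [sum_image hσ.injOn_primitivePart, hx3]
  exact_mod_cast (sum_le_sum fun p _ => LatticePolygon.normL1_primitivePart_le _).trans hperimeter
end

section
/- Let g₁, g₂ : ℝ² → ℝ be linear maps g_i(x) = u_i·x with u₁, u₂ ∈ ℤ² linearly independent, let h ∈ H ⊆ ℤ² be a finite set with g_i(h) = min over H of g_i and g_i(x) > g_i(h) for all x ∈ H∖{h} (i = 1,2), and suppose g_i(H∖{h}) − g_i(h) ⊆ [1, N+1] for i = 1,2. If f is a real polynomial with f(0) > Σ_{j=1}^{N+1}|f(j)|, then the polynomial p(x) = f(g₁(x)−g₁(h))·f(g₂(x)−g₂(h)) satisfies p(h) > Σ_{x∈H∖{h}} |p(x)|. -/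
/-!
Shifting by `h`, the pair `(g₁ x - g₁ h, g₂ x - g₂ h)` is injective in `x`, because `u₁, u₂` are
linearly independent, and sends `H ∖ {h}` into `[1, N + 1]²`. Hence the terms `|p(x)|` for
`x ∈ H ∖ {h}` are distinct terms of the expansion of `(∑_{j=1}^{N+1} |f(j)|)²`, which is `< f(0)² = p(h)`.
-/

open Finset

theorem Finset.sum_mul_le_sum_mul_sum_of_injOn {ι α β R : Type*} [CommSemiring R]
    [PartialOrder R] [IsOrderedRing R] {s : Finset ι} {A : Finset α} {B : Finset β}
    {φ : ι → α × β} (hφ : Set.InjOn φ s) (hmaps : ∀ x ∈ s, φ x ∈ A ×ˢ B) {F : α → R}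
    {G : β → R} (hF : ∀ a ∈ A, 0 ≤ F a) (hG : ∀ b ∈ B, 0 ≤ G b) :
    ∑ x ∈ s, F (φ x).1 * G (φ x).2 ≤ (∑ a ∈ A, F a) * ∑ b ∈ B, G b := by
  classical
  calc ∑ x ∈ s, F (φ x).1 * G (φ x).2
      = ∑ p ∈ s.image φ, F p.1 * G p.2 := (sum_image (f := fun p => F p.1 * G p.2) hφ).symm
    _ ≤ ∑ p ∈ A ×ˢ B, F p.1 * G p.2 :=
      sum_le_sum_of_subset_of_nonneg (image_subset_iff.mpr hmaps) fun p hp _ =>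
        mul_nonneg (hF _ (mem_product.mp hp).1) (hG _ (mem_product.mp hp).2)
    _ = (∑ a ∈ A, F a) * ∑ b ∈ B, G b := by rw [sum_mul_sum, sum_product]

theorem Finset.sum_Icc_natCast {M : Type*} [AddCommMonoid M] (F : ℤ → M) (a b : ℕ) :
    ∑ n ∈ Icc a b, F n = ∑ z ∈ Icc (a : ℤ) b, F z :=
  sum_nbij' (↑) Int.toNat (fun n hn => by simpa using hn)
    (fun z hz => by simp only [mem_Icc] at hz ⊢; omega)
    (fun n _ => Int.toNat_natCast n)
    (fun z hz => by simp only [mem_Icc] at hz; omega)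
    (fun _ _ => rfl)

theorem injective_linearPair_of_det_ne_zero {R : Type*} [CommRing R] [NoZeroDivisors R]
    {u₁ u₂ : R × R} (hdet : u₁.1 * u₂.2 - u₁.2 * u₂.1 ≠ 0) :
    Function.Injective fun x : R × R => (u₁.1 * x.1 + u₁.2 * x.2, u₂.1 * x.1 + u₂.2 * x.2) := by
  intro x y hxy
  obtain ⟨e₁, e₂⟩ := Prod.ext_iff.mp hxy
  dsimp only at e₁ e₂
  -- Cramer's rule: the determinant annihilates each coordinate of `x - y`.
  have d₁ : (u₁.1 * u₂.2 - u₁.2 * u₂.1) * (x.1 - y.1) = 0 := by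
    linear_combination u₂.2 * e₁ - u₁.2 * e₂
  have d₂ : (u₁.1 * u₂.2 - u₁.2 * u₂.1) * (x.2 - y.2) = 0 := by
    linear_combination u₁.1 * e₂ - u₂.1 * e₁
  exact Prod.ext (sub_eq_zero.mp ((mul_eq_zero.mp d₁).resolve_left hdet))
    (sub_eq_zero.mp ((mul_eq_zero.mp d₂).resolve_left hdet))

theorem stmt15_general (N : ℕ) (u₁ u₂ : ℤ × ℤ)
    (hind : u₁.1 * u₂.2 - u₁.2 * u₂.1 ≠ 0)
    (H : Finset (ℤ × ℤ)) (h : ℤ × ℤ)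
    (g₁ g₂ : ℤ × ℤ → ℤ)
    (hg₁ : ∀ x, g₁ x = u₁.1 * x.1 + u₁.2 * x.2)
    (hg₂ : ∀ x, g₂ x = u₂.1 * x.1 + u₂.2 * x.2)
    (hrange : ∀ x ∈ H, x ≠ h →
      (1 ≤ g₁ x - g₁ h ∧ g₁ x - g₁ h ≤ (N : ℤ) + 1) ∧
      (1 ≤ g₂ x - g₂ h ∧ g₂ x - g₂ h ≤ (N : ℤ) + 1))
    (f : Polynomial ℝ)
    (hf : f.eval 0 > ∑ j ∈ Finset.Icc 1 (N + 1), |f.eval (j : ℝ)|) :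
    f.eval ((g₁ h - g₁ h : ℤ) : ℝ) * f.eval ((g₂ h - g₂ h : ℤ) : ℝ) >
      ∑ x ∈ H.erase h,
        |f.eval ((g₁ x - g₁ h : ℤ) : ℝ) * f.eval ((g₂ x - g₂ h : ℤ) : ℝ)| := by
  set F : ℤ → ℝ := fun z => |f.eval (z : ℝ)|
  set φ : ℤ × ℤ → ℤ × ℤ := fun x => (g₁ x - g₁ h, g₂ x - g₂ h)
  have hT : ∑ j ∈ Icc 1 (N + 1), |f.eval (j : ℝ)| = ∑ z ∈ Icc (1 : ℤ) (N + 1), F z := by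
    simpa [F] using sum_Icc_natCast F 1 (N + 1)
  have hinj : Set.InjOn φ (H.erase h) := fun x _ y _ hxy => by
    refine injective_linearPair_of_det_ne_zero hind ?_
    simp only [φ, Prod.ext_iff, sub_left_inj, hg₁, hg₂] at hxy
    exact Prod.ext hxy.1 hxy.2
  have hmaps : ∀ x ∈ H.erase h, φ x ∈ Icc (1 : ℤ) (N + 1) ×ˢ Icc (1 : ℤ) (N + 1) := by
    intro x hx
    obtain ⟨hne, hx⟩ := mem_erase.mp hx
    simpa [φ] using hrange x hx hne
  calc ∑ x ∈ H.erase h, |f.eval ((g₁ x - g₁ h : ℤ) : ℝ) * f.eval ((g₂ x - g₂ h : ℤ) : ℝ)|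
      = ∑ x ∈ H.erase h, F (φ x).1 * F (φ x).2 := by simp only [abs_mul, F, φ]
    _ ≤ (∑ z ∈ Icc (1 : ℤ) (N + 1), F z) * ∑ z ∈ Icc (1 : ℤ) (N + 1), F z :=
      sum_mul_le_sum_mul_sum_of_injOn hinj hmaps (fun _ _ => abs_nonneg _) fun _ _ => abs_nonneg _
    _ < f.eval 0 * f.eval 0 := by
      rw [← hT]
      exact mul_self_lt_mul_self (sum_nonneg fun _ _ => abs_nonneg _) hf
    _ = f.eval ((g₁ h - g₁ h : ℤ) : ℝ) * f.eval ((g₂ h - g₂ h : ℤ) : ℝ) := by simp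

theorem stmt15 (N : ℕ) (u₁ u₂ : ℤ × ℤ)
    (hind : u₁.1 * u₂.2 - u₁.2 * u₂.1 ≠ 0)
    (H : Finset (ℤ × ℤ)) (h : ℤ × ℤ) (hh : h ∈ H)
    (g₁ g₂ : ℤ × ℤ → ℤ)
    (hg₁ : ∀ x, g₁ x = u₁.1 * x.1 + u₁.2 * x.2)
    (hg₂ : ∀ x, g₂ x = u₂.1 * x.1 + u₂.2 * x.2)
    (hmin : ∀ x ∈ H, g₁ h ≤ g₁ x ∧ g₂ h ≤ g₂ x)
    (hstrict : ∀ x ∈ H, x ≠ h → g₁ h < g₁ x ∧ g₂ h < g₂ x)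
    (hrange : ∀ x ∈ H, x ≠ h →
      (1 ≤ g₁ x - g₁ h ∧ g₁ x - g₁ h ≤ (N : ℤ) + 1) ∧
      (1 ≤ g₂ x - g₂ h ∧ g₂ x - g₂ h ≤ (N : ℤ) + 1))
    (f : Polynomial ℝ)
    (hf : f.eval 0 > ∑ j ∈ Finset.Icc 1 (N + 1), |f.eval (j : ℝ)|) :
    f.eval ((g₁ h - g₁ h : ℤ) : ℝ) * f.eval ((g₂ h - g₂ h : ℤ) : ℝ) >
      ∑ x ∈ H.erase h,
        |f.eval ((g₁ x - g₁ h : ℤ) : ℝ) * f.eval ((g₂ x - g₂ h : ℤ) : ℝ)| :=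
  stmt15_general N u₁ u₂ hind H h g₁ g₂ hg₁ hg₂ hrange f hf
end

section
/- Let d ≥ 2, and let f₀, f₁, …, f_{d−1} be real univariate functions and g₀, …, g_{d−1} : ℝ^d → ℝ linear maps such that the map x ↦ (g₀(x),…,g_{d−1}(x)) is injective. Let H ⊆ ℝ^d be finite and suppose g₀(H) ⊆ ℤ and for each k ∈ ℤ and 1 ≤ i ≤ d−1 there is ε_{ik} ∈ (−1/2, 1/2] with g_i(H ∩ g₀^{−1}(k)) ⊆ ℤ + ε_{ik}. Then Σ_{x∈H} ∏_{i=0}^{d−1}|f_i(g_i(x))| ≤ Σ_{k∈g₀(H)} |f₀(k)| · ∏_{i=1}^{d−1} Σ_{j∈ℤ} |f_i(j + ε_{ik})|, provided the right-hand sums converge. -/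
/-!
Split `H` into the slices `g₀ = k`. On a slice the first factor is the constant `|f₀ k|`, and by
injectivity of `(g₀, …, g_{d-1})` the remaining coordinates `(g₁ x, …, g_{d-1} x)` are distinct
points of the shifted lattice `∏ᵢ (ℤ + εᵢₖ)`; a finite sum of products over distinct points of a
product set is at most the product of the full (nonnegative) series.
-/

open Finset

theorem Finset.sum_prod_le_prod_tsum {ι β α : Type*} [DecidableEq ι] {h : ι → α → ℝ}
    (h_nonneg : ∀ i j, 0 ≤ h i j) {s : Finset ι} (h_summable : ∀ i ∈ s, Summable (h i))
    {S : Finset β} {φ : β → ι → α}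
    (hφ : ∀ x ∈ S, ∀ y ∈ S, (∀ i ∈ s, φ x i = φ y i) → x = y) :
    ∑ x ∈ S, ∏ i ∈ s, h i (φ x i) ≤ ∏ i ∈ s, ∑' j, h i j := by
  classical
  induction s using Finset.induction_on generalizing S with
  | empty =>
    simpa using Finset.card_le_one.2 fun x hx y hy => hφ x hx y hy (by simp)
  | insert a s ha ih =>
    have fibre_le : ∀ j, ∑ x ∈ S with φ x a = j, ∏ i ∈ insert a s, h i (φ x i)
        ≤ h a j * ∏ i ∈ s, ∑' j, h i j := by
      intro j
      rw [sum_congr rfl fun x hx => by rw [prod_insert ha, (mem_filter.1 hx).2], ← mul_sum]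
      refine mul_le_mul_of_nonneg_left (ih (fun i hi => h_summable i (mem_insert_of_mem hi))
        fun x hx y hy hxy => ?_) (h_nonneg a j)
      rw [mem_filter] at hx hy
      refine hφ x hx.1 y hy.1 fun i hi => ?_
      rcases mem_insert.1 hi with rfl | hi
      exacts [hx.2.trans hy.2.symm, hxy i hi]
    rw [prod_insert ha]
    calc ∑ x ∈ S, ∏ i ∈ insert a s, h i (φ x i)
        = ∑ j ∈ S.image (φ · a), ∑ x ∈ S with φ x a = j, ∏ i ∈ insert a s, h i (φ x i) :=
          (sum_fiberwise_of_maps_to (fun x hx => mem_image_of_mem _ hx) _).symm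
      _ ≤ ∑ j ∈ S.image (φ · a), h a j * ∏ i ∈ s, ∑' j, h i j :=
          sum_le_sum fun j _ => fibre_le j
      _ = (∑ j ∈ S.image (φ · a), h a j) * ∏ i ∈ s, ∑' j, h i j := (sum_mul ..).symm
      _ ≤ (∑' j, h a j) * ∏ i ∈ s, ∑' j, h i j := by
          gcongr
          · exact prod_nonneg fun i _ => tsum_nonneg (h_nonneg i)
          · exact (h_summable a (mem_insert_self a s)).sum_le_tsum _ fun j _ => h_nonneg a j

theorem sum_prod_abs_le_of_lattice_slice {ι E : Type*} [Fintype ι] [DecidableEq ι] (i₀ : ι)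
    (f : ι → ℝ → ℝ) (g : ι → E → ℝ) {S : Finset E} (hinj : Set.InjOn (fun x i => g i x) S)
    {k : ℝ} (hk : ∀ x ∈ S, g i₀ x = k) (ε : ι → ℝ)
    (hshift : ∀ x ∈ S, ∀ i ≠ i₀, ∃ z : ℤ, g i x = z + ε i)
    (hsum : ∀ i ≠ i₀, Summable fun j : ℤ => |f i (j + ε i)|) :
    ∑ x ∈ S, ∏ i, |f i (g i x)| ≤ |f i₀ k| * ∏ i ∈ univ.erase i₀, ∑' j : ℤ, |f i (j + ε i)| := by
  -- `g i x - ε i` is an integer, so the floor recovers the lattice coordinate of `x`.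
  set z : E → ι → ℤ := fun x i => ⌊g i x - ε i⌋
  have hz : ∀ x ∈ S, ∀ i ≠ i₀, g i x = z x i + ε i := by
    intro x hx i hi
    obtain ⟨n, hn⟩ := hshift x hx i hi
    simp [z, hn]
  calc ∑ x ∈ S, ∏ i, |f i (g i x)|
      = |f i₀ k| * ∑ x ∈ S, ∏ i ∈ univ.erase i₀, |f i (z x i + ε i)| := by
        rw [mul_sum]
        refine sum_congr rfl fun x hx => ?_
        rw [← mul_prod_erase univ _ (mem_univ i₀), hk x hx]
        exact congrArg _ (prod_congr rfl fun i hi => by rw [hz x hx i (ne_of_mem_erase hi)])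
    _ ≤ |f i₀ k| * ∏ i ∈ univ.erase i₀, ∑' j : ℤ, |f i (j + ε i)| := by
        refine mul_le_mul_of_nonneg_left (sum_prod_le_prod_tsum (fun _ _ => abs_nonneg _)
          (fun i hi => hsum i (ne_of_mem_erase hi)) fun x hx y hy hxy => hinj hx hy ?_)
          (abs_nonneg _)
        funext i
        dsimp only
        by_cases hi : i = i₀
        · rw [hi, hk x hx, hk y hy]
        · rw [hz x hx i hi, hz y hy i hi, hxy i (mem_erase.2 ⟨hi, mem_univ i⟩)]

theorem stmt19_general (d : ℕ)
    (i₀ : Fin d)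
    (f : Fin d → ℝ → ℝ)
    (g : Fin d → (Fin d → ℝ) → ℝ)
    (hinj : Function.Injective (fun x : Fin d → ℝ => fun i => g i x))
    (H : Finset (Fin d → ℝ))
    (ε : Fin d → ℝ → ℝ)
    (hshift : ∀ x ∈ H, ∀ i, i ≠ i₀ → ∃ z : ℤ, g i x = (z : ℝ) + ε i (g i₀ x))
    (hsum : ∀ i, i ≠ i₀ → ∀ k : ℝ, Summable (fun j : ℤ => |f i ((j : ℝ) + ε i k)|)) :
    ∑ x ∈ H, ∏ i, |f i (g i x)| ≤
      ∑ k ∈ H.image (g i₀),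
        |f i₀ k| * ∏ i ∈ Finset.univ.erase i₀, ∑' j : ℤ, |f i ((j : ℝ) + ε i k)| := by
  classical
  rw [← sum_fiberwise_of_maps_to fun x hx => mem_image_of_mem (g i₀) hx]
  refine sum_le_sum fun k _ => sum_prod_abs_le_of_lattice_slice i₀ f g hinj.injOn
    (fun x hx => (mem_filter.1 hx).2) _ (fun x hx i hi => ?_) fun i hi => hsum i hi k
  obtain ⟨hxH, hxk⟩ := mem_filter.1 hx
  rw [← hxk]
  exact hshift x hxH i hi

theorem stmt19 (d : ℕ) (hd : 2 ≤ d)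
    (i₀ : Fin d) (hi₀ : (i₀ : ℕ) = 0)
    (f : Fin d → ℝ → ℝ)
    (g : Fin d → (Fin d → ℝ) → ℝ)
    (hlin : ∀ i, IsLinearMap ℝ (g i))
    (hinj : Function.Injective (fun x : Fin d → ℝ => fun i => g i x))
    (H : Finset (Fin d → ℝ))
    (hint : ∀ x ∈ H, ∃ z : ℤ, g i₀ x = (z : ℝ))
    (ε : Fin d → ℝ → ℝ)
    (hε : ∀ i, i ≠ i₀ → ∀ k : ℝ, ε i k ∈ Set.Ioc (-(1 / 2) : ℝ) (1 / 2))
    (hshift : ∀ x ∈ H, ∀ i, i ≠ i₀ → ∃ z : ℤ, g i x = (z : ℝ) + ε i (g i₀ x))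
    (hsum : ∀ i, i ≠ i₀ → ∀ k : ℝ, Summable (fun j : ℤ => |f i ((j : ℝ) + ε i k)|)) :
    ∑ x ∈ H, ∏ i, |f i (g i x)| ≤
      ∑ k ∈ H.image (g i₀),
        |f i₀ k| * ∏ i ∈ Finset.univ.erase i₀, ∑' j : ℤ, |f i ((j : ℝ) + ε i k)| :=
  stmt19_general d i₀ f g hinj H ε hshift hsum
end
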